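/- Let L₁,₂ be the 4-dimensional complex ω-Lie algebra with ordered basis (e,x,y,z) defined by the nonzero brackets [e,x] = z, [e,y] = −e, [x,y] = y, [y,z] = z and the bilinear form determined by ω(x,y) = 1 (all other values of ω on basis pairs are 0). Let a,b,c,d,r,s,t,u ∈ ℂ satisfy ab + du + cr = 0, as + rt − cu = 0, dt + c² = 0, bt − cs = 0, bc + ds = 0, and let R be the linear operator on L₁,₂ with R(e) = a·z, R(x) = b·e + c·x + d·y + r·z, R(y) = s·e + t·x − c·y + u·z, R(z) = 0. Define [p,q]_R := [R(p),q] + [p,R(q)]. Then the bracket [-,-]_R is solvable of derived length at most 2: [[p₁,p₂]_R, [p₃,p₄]_R]_R = 0 for all p₁, p₂, p₃, p₄ ∈ L₁,₂. -/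
import Mathlib


/-- The bracket of the 4-dimensional complex ω-Lie algebra `L₁,₂`, with ordered basis
`(e, x, y, z) = (e₀, e₁, e₂, e₃)`, determined by the nonzero brackets
`[e,x] = z`, `[e,y] = −e`, `[x,y] = y`, `[y,z] = z`. -/
def L12bracket (u v : Fin 4 → ℂ) : Fin 4 → ℂ :=
  ![-(u 0 * v 2 - u 2 * v 0), 0, u 1 * v 2 - u 2 * v 1,
    (u 0 * v 1 - u 1 * v 0) + (u 2 * v 3 - u 3 * v 2)]

lemma basis_decomp (p : Fin 4 → ℂ) :
    p = p 0 • (Pi.single 0 1 : Fin 4 → ℂ) + p 1 • (Pi.single 1 1 : Fin 4 → ℂ)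
      + p 2 • (Pi.single 2 1 : Fin 4 → ℂ) + p 3 • (Pi.single 3 1 : Fin 4 → ℂ) := by
  funext i
  fin_cases i <;> simp [Pi.single_apply]

/-- For any compatible square-zero Rota-Baxter operator `R` of the
parametrized form `R₃` on `L₁,₂`, the induced bracket `[p,q]_R = [R p, q] + [p, R q]`
is solvable of derived length at most 2. -/
theorem induced_bracket_on_L12_solvable
    (a b c d r s t w : ℂ)
    (h1 : a * b + d * w + c * r = 0) (h2 : a * s + r * t - c * w = 0)
    (h3 : d * t + c ^ 2 = 0) (h4 : b * t - c * s = 0) (h5 : b * c + d * s = 0)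
    (R : (Fin 4 → ℂ) →ₗ[ℂ] (Fin 4 → ℂ))
    (hRe : R (Pi.single 0 1) = ![0, 0, 0, a])
    (hRx : R (Pi.single 1 1) = ![b, c, d, r])
    (hRy : R (Pi.single 2 1) = ![s, t, -c, w])
    (hRz : R (Pi.single 3 1) = 0)
    (brR : (Fin 4 → ℂ) → (Fin 4 → ℂ) → (Fin 4 → ℂ))
    (hbrR : ∀ p q, brR p q = L12bracket (R p) q + L12bracket p (R q)) :
    ∀ p₁ p₂ p₃ p₄ : Fin 4 → ℂ, brR (brR p₁ p₂) (brR p₃ p₄) = 0 := by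
  have hR : ∀ p : Fin 4 → ℂ, R p =
      ![b * p 1 + s * p 2, c * p 1 + t * p 2, d * p 1 - c * p 2,
        a * p 0 + r * p 1 + w * p 2] := by
    intro p
    conv_lhs => rw [basis_decomp p]
    simp only [map_add, map_smul, hRe, hRx, hRy, hRz, smul_zero]
    funext i
    fin_cases i <;> simp <;> ring
  intro p₁ p₂ p₃ p₄
  simp only [hbrR, hR, L12bracket]
  funext i
  fin_cases i <;> simp <;> ring
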